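/- Let λ = γ = (1+√5)/2 and T(x,y) = (y, {y/γ − x}) on [0,1)². Let 𝓡 = {(x,y) ∈ [0,1)² : y < γx, x + y > 1, x < γy} ∪ {(0,0)}, 𝓓 = [0,1)² ∖ 𝓡, D₀ = {(x,y) ∈ [0,1)² : y ≥ γx} ∖ {(0,0)}, and D₁ = 𝓓 ∖ D₀. For n ≥ 0 set Nₙ = (5·4ⁿ − 2)/3. Then for every integer n ≥ 0: (i) for every z ∈ D₀, T(z/γ^{2n}) = T(z)/γ^{2n}; (ii) for every z ∈ D₁, T^{Nₙ}(z/γ^{2n}) = T(z)/γ^{2n}; (iii) for every z ∈ D₁ and every integer k with 1 ≤ k < Nₙ, the point T^k(z/γ^{2n}) does not lie in {w/γ^{2n} : w ∈ 𝓓}. -/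

import Mathlib

noncomputable def gamma : ℝ := (1 + Real.sqrt 5) / 2

/-- The map T(x,y) = (y, {y/γ - x}) for λ = γ. -/
noncomputable def T : ℝ × ℝ → ℝ × ℝ := fun z => (z.2, Int.fract (z.2 / gamma - z.1))

/-- Coordinatewise division of a point by a positive real. -/
noncomputable def divP (z : ℝ × ℝ) (r : ℝ) : ℝ × ℝ := (z.1 / r, z.2 / r)

/-- The set 𝓡. -/
noncomputable def Rcal : Set (ℝ × ℝ) :=
  {z : ℝ × ℝ | z.1 ∈ Set.Ico (0 : ℝ) 1 ∧ z.2 ∈ Set.Ico (0 : ℝ) 1 ∧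
    z.2 < gamma * z.1 ∧ 1 < z.1 + z.2 ∧ z.1 < gamma * z.2} ∪ {(0, 0)}

/-- The set 𝓓 = [0,1)² \ 𝓡. -/
noncomputable def Dcal : Set (ℝ × ℝ) :=
  {z : ℝ × ℝ | z.1 ∈ Set.Ico (0 : ℝ) 1 ∧ z.2 ∈ Set.Ico (0 : ℝ) 1} \ Rcal

/-- The set D₀. -/
noncomputable def D0 : Set (ℝ × ℝ) :=
  {z : ℝ × ℝ | z.1 ∈ Set.Ico (0 : ℝ) 1 ∧ z.2 ∈ Set.Ico (0 : ℝ) 1 ∧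
    gamma * z.1 ≤ z.2} \ {(0, 0)}

/-- The set D₁. -/
noncomputable def D1 : Set (ℝ × ℝ) := Dcal \ D0

/-- Nₙ = (5·4ⁿ − 2)/3 (exact division). -/
def N (n : ℕ) : ℕ := (5 * 4 ^ n - 2) / 3

/-!
Division by `γ²` renormalizes `T`. On `D₀` the map does not wrap around (`y/γ - x ∈ [0, 1)`), so
`T` commutes with every contraction `z ↦ z/c`, `c ≥ 1`. For `z ∈ D₁` an explicit computation, using
`1/γ = γ - 1` and `1/γ² = 2 - γ`, shows that the orbit of `z/γ²` runs through `D₁ D₀ D₁ D₁ D₀ D₁`,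
never meets `𝓓/γ²` after its start, and reaches `T(z)/γ²` in six steps.

Induction on `n`, applied at scale `γ^{2n}` to these six points, turns each visit to `D₀` into one
step and each visit to `D₁` into `Nₙ` steps, so the return time is `4Nₙ + 2 = Nₙ₊₁` (the
substitution `1 ↦ 101101`). The orbit avoids `𝓓/γ^{2n+2}` inside each block because `𝓓/γ² ⊆ 𝓓`,
and at the block ends because the six points avoid `𝓓/γ²`.
-/

open Function Set

lemma gamma_sq : gamma ^ 2 = gamma + 1 := by
  have h5 : Real.sqrt 5 ^ 2 = 5 := Real.sq_sqrt (by norm_num)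
  unfold gamma
  linear_combination h5 / 4

lemma three_halves_lt_gamma : 3 / 2 < gamma := by
  have h5 : 2 < Real.sqrt 5 := (Real.lt_sqrt zero_le_two).2 (by norm_num)
  unfold gamma
  linarith

lemma gamma_lt_five_thirds : gamma < 5 / 3 := by nlinarith [gamma_sq, three_halves_lt_gamma]

lemma one_lt_gamma : 1 < gamma := by linarith [three_halves_lt_gamma]

lemma gamma_pos : 0 < gamma := by linarith [three_halves_lt_gamma]

lemma div_gamma (t : ℝ) : t / gamma = t * (gamma - 1) := by
  rw [div_eq_iff gamma_pos.ne']
  linear_combination -t * gamma_sq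

lemma div_gamma_sq (t : ℝ) : t / gamma ^ 2 = t * (2 - gamma) := by
  rw [div_eq_iff (pow_pos gamma_pos 2).ne']
  linear_combination (t * gamma - t) * gamma_sq

lemma N_zero : N 0 = 1 := rfl

lemma N_succ (n : ℕ) : N (n + 1) = 4 * N n + 2 := by
  have h : 4 ^ n % 3 = 1 := by rw [Nat.pow_mod]; simp
  have h1 : 1 ≤ 4 ^ n := Nat.one_le_pow _ _ (by norm_num)
  unfold N
  rw [pow_succ]
  omega

structure ReachesAvoiding {α : Type*} (f : α → α) (S : Set α) (k : ℕ) (x y : α) : Prop where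
  iterate_eq : f^[k] x = y
  not_mem : ∀ j, 0 < j → j < k → f^[j] x ∉ S

namespace ReachesAvoiding

variable {α : Type*} {f : α → α} {S : Set α} {x y z : α} {a b : ℕ}

lemma one (f : α → α) (S : Set α) (x : α) : ReachesAvoiding f S 1 x (f x) :=
  ⟨rfl, fun _ h₀ h₁ => absurd h₁ (by omega)⟩

lemma mono {S' : Set α} (h : ReachesAvoiding f S a x y) (hS : S' ⊆ S) :
    ReachesAvoiding f S' a x y :=
  ⟨h.iterate_eq, fun j h₀ h₁ hj => h.not_mem j h₀ h₁ (hS hj)⟩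

lemma trans (h₁ : ReachesAvoiding f S a x y) (hy : y ∉ S) (h₂ : ReachesAvoiding f S b y z) :
    ReachesAvoiding f S (a + b) x z := by
  have split (j : ℕ) (hj : a ≤ j) : f^[j] x = f^[j - a] y := by
    rw [← h₁.iterate_eq, ← iterate_add_apply, Nat.sub_add_cancel hj]
  refine ⟨by rw [split _ (by omega), Nat.add_sub_cancel_left, h₂.iterate_eq], fun j h₀ hj => ?_⟩
  rcases lt_trichotomy j a with hja | rfl | haj
  · exact h₁.not_mem j h₀ hja
  · rwa [h₁.iterate_eq]
  · rw [split j haj.le]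
    exact h₂.not_mem _ (by omega) (by omega)

end ReachesAvoiding

lemma mem_D0_iff {x y : ℝ} : (x, y) ∈ D0 ↔ 0 ≤ x ∧ 0 < y ∧ y < 1 ∧ gamma * x ≤ y := by
  simp only [D0, mem_sdiff, mem_ofPred_eq, mem_singleton_iff, Prod.mk.injEq, mem_Ico, not_and]
  constructor
  · rintro ⟨⟨⟨hx, -⟩, ⟨hy, hy1⟩, hxy⟩, hne⟩
    refine ⟨hx, lt_of_le_of_ne hy fun h => hne ?_ h.symm, hy1, hxy⟩
    nlinarith [gamma_pos]
  · rintro ⟨hx, hy, hy1, hxy⟩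
    refine ⟨⟨⟨hx, ?_⟩, ⟨hy.le, hy1⟩, hxy⟩, fun _ => hy.ne'⟩
    nlinarith [one_lt_gamma]

lemma mem_D1_iff {x y : ℝ} :
    (x, y) ∈ D1 ↔ 0 ≤ y ∧ x < 1 ∧ y < gamma * x ∧ (x + y ≤ 1 ∨ gamma * y ≤ x) := by
  constructor
  · rintro ⟨⟨⟨⟨hx, hx1⟩, hy, hy1⟩, hR⟩, hD0⟩
    have hyx : y < gamma * x := by
      by_contra! h
      rcases hy.eq_or_lt with rfl | hy
      · exact hR (Or.inr (Prod.ext (by nlinarith [gamma_pos]) rfl))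
      · exact hD0 (mem_D0_iff.2 ⟨hx, hy, hy1, h⟩)
    refine ⟨hy, hx1, hyx, ?_⟩
    by_contra! h
    exact hR (Or.inl ⟨⟨hx, hx1⟩, ⟨hy, hy1⟩, hyx, h.1, h.2⟩)
  · rintro ⟨hy, hx1, hyx, hxy⟩
    have hx : 0 < x := pos_of_mul_pos_right (hy.trans_lt hyx) gamma_pos.le
    have hy1 : y < 1 := by rcases hxy with h | h <;> nlinarith [one_lt_gamma]
    refine ⟨⟨⟨⟨hx.le, hx1⟩, hy, hy1⟩, ?_⟩, fun h => (mem_D0_iff.1 h).2.2.2.not_gt hyx⟩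
    rintro (⟨-, -, -, hsum, hlt⟩ | h0)
    · rcases hxy with h | h <;> linarith
    · exact hx.ne' (Prod.mk.inj h0).1

lemma T_mk_eq {a b c : ℝ} (m : ℤ) (h : c = b * (gamma - 1) - a + m) (hc₀ : 0 ≤ c) (hc₁ : c < 1) :
    T (a, b) = (b, c) := by
  simp only [T, div_gamma, Prod.mk.injEq, true_and]
  rw [Int.fract_eq_iff]
  exact ⟨hc₀, hc₁, -m, by rw [h]; push_cast; ring⟩

lemma divP_divP (z : ℝ × ℝ) (a b : ℝ) : divP (divP z a) b = divP z (a * b) := by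
  simp only [divP, div_div]

lemma divP_injective {c : ℝ} (hc : c ≠ 0) : Injective (divP · c) := by
  intro a b h
  simp only [divP, Prod.mk.injEq, div_left_inj' hc] at h
  exact Prod.ext h.1 h.2

lemma T_divP_of_mem_D0 {c : ℝ} (hc : 1 ≤ c) {z : ℝ × ℝ} (hz : z ∈ D0) :
    T (divP z c) = divP (T z) c := by
  obtain ⟨x, y⟩ := z
  obtain ⟨hx, hy, hy1, hxy⟩ := mem_D0_iff.1 hz
  have hc₀ : 0 < c := one_pos.trans_le hc
  have h₀ : 0 ≤ y * (gamma - 1) - x := by nlinarith [gamma_sq, one_lt_gamma]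
  have h₁ : y * (gamma - 1) - x < 1 := by nlinarith [gamma_lt_five_thirds]
  have hT : T (x, y) = (y, y * (gamma - 1) - x) := T_mk_eq 0 (by push_cast; ring) h₀ h₁
  simp only [hT, divP]
  exact T_mk_eq 0 (by push_cast; ring) (by positivity) ((div_le_self h₀ hc).trans_lt h₁)

lemma divP_gamma_sq_mem_Dcal {w : ℝ × ℝ} (hw : w ∈ Dcal) : divP w (gamma ^ 2) ∈ Dcal := by
  obtain ⟨x, y⟩ := w
  obtain ⟨⟨⟨hx, hx1⟩, hy, hy1⟩, hR⟩ := hw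
  have hs₀ : 0 < 2 - gamma := by linarith [gamma_lt_five_thirds]
  have hs₁ : 2 - gamma < 1 / 2 := by linarith [three_halves_lt_gamma]
  simp only [divP, div_gamma_sq]
  refine ⟨⟨⟨by positivity, by nlinarith⟩, by positivity, by nlinarith⟩, ?_⟩
  rintro (⟨-, -, -, hsum, -⟩ | h0)
  · nlinarith
  · refine hR (Or.inr (Prod.ext ?_ ?_))
    · simpa [hs₀.ne'] using (Prod.mk.inj h0).1
    · simpa [hs₀.ne'] using (Prod.mk.inj h0).2

lemma image_divP_gamma_sq_mul_subset (c : ℝ) :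
    (divP · (gamma ^ 2 * c)) '' Dcal ⊆ (divP · c) '' Dcal := by
  rintro _ ⟨w, hw, rfl⟩
  exact ⟨divP w (gamma ^ 2), divP_gamma_sq_mem_Dcal hw, divP_divP w _ _⟩

lemma divP_not_mem_image_gamma_sq_mul {c : ℝ} (hc : c ≠ 0) {p : ℝ × ℝ}
    (hp : p ∉ (divP · (gamma ^ 2)) '' Dcal) : divP p c ∉ (divP · (gamma ^ 2 * c)) '' Dcal := by
  rintro ⟨w, hw, hwp⟩
  exact hp ⟨w, hw, divP_injective hc (by simpa only [divP_divP] using hwp)⟩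

lemma not_mem_image_divP_gamma_sq {p : ℝ × ℝ} (hp : 2 - gamma ≤ p.1 ∨ 2 - gamma ≤ p.2) :
    p ∉ (divP · (gamma ^ 2)) '' Dcal := by
  rintro ⟨⟨x, y⟩, ⟨⟨⟨-, hx1⟩, -, hy1⟩, -⟩, rfl⟩
  simp only [divP, div_gamma_sq] at hp
  have : 0 < 2 - gamma := by linarith [gamma_lt_five_thirds]
  rcases hp with h | h <;> nlinarith

lemma T_orbit_divP_gamma_sq {x y : ℝ} (hz : (x, y) ∈ D1) :
    T (divP (x, y) (gamma ^ 2)) = (y * (2 - gamma), 1 - (2 - gamma) * x + (2 * gamma - 3) * y) ∧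
    T (y * (2 - gamma), 1 - (2 - gamma) * x + (2 * gamma - 3) * y) =
      (1 - (2 - gamma) * x + (2 * gamma - 3) * y, gamma - 1 - (2 * gamma - 3) * (x + y)) ∧
    T (1 - (2 - gamma) * x + (2 * gamma - 3) * y, gamma - 1 - (2 * gamma - 3) * (x + y)) =
      (gamma - 1 - (2 * gamma - 3) * (x + y), 2 - gamma + (2 * gamma - 3) * x - (2 - gamma) * y) ∧
    T (gamma - 1 - (2 * gamma - 3) * (x + y), 2 - gamma + (2 * gamma - 3) * x - (2 - gamma) * y) =
      (2 - gamma + (2 * gamma - 3) * x - (2 - gamma) * y, gamma - 1 + (2 - gamma) * x) ∧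
    T (2 - gamma + (2 * gamma - 3) * x - (2 - gamma) * y, gamma - 1 + (2 - gamma) * x) =
      (gamma - 1 + (2 - gamma) * x, y * (2 - gamma)) ∧
    T (gamma - 1 + (2 - gamma) * x, y * (2 - gamma)) = divP (T (x, y)) (gamma ^ 2) := by
  obtain ⟨hy, hx1, hyx, -⟩ := mem_D1_iff.1 hz
  have hg := gamma_sq
  have hg₁ := three_halves_lt_gamma
  have hg₂ := gamma_lt_five_thirds
  have hTz : T (x, y) = (y, y * (gamma - 1) - x + 1) :=
    T_mk_eq 1 (by push_cast; ring) (by nlinarith) (by nlinarith)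
  refine ⟨?_, ?_, ?_, ?_, ?_, ?_⟩
  · simp only [divP, div_gamma_sq]
    exact T_mk_eq 1 (by push_cast; linear_combination y * hg) (by nlinarith) (by nlinarith)
  · exact T_mk_eq 0 (by push_cast; linear_combination -(x + 2 * y) * hg)
      (by nlinarith) (by nlinarith)
  · exact T_mk_eq 1 (by push_cast; linear_combination (2 * x + 2 * y - 1) * hg)
      (by nlinarith) (by nlinarith)
  · exact T_mk_eq 1 (by push_cast; linear_combination (1 - 2 * x - y) * hg)
      (by nlinarith) (by nlinarith)
  · exact T_mk_eq 0 (by push_cast; linear_combination (x - 1) * hg)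
      (by nlinarith) (by nlinarith)
  · rw [hTz]
    simp only [divP, div_gamma_sq]
    exact T_mk_eq 1 (by push_cast; ring) (by nlinarith) (by nlinarith)

lemma exists_itinerary_divP_gamma_sq {z : ℝ × ℝ} (hz : z ∈ D1) :
    ∃ q₁ q₂ q₃ q₄ q₅ : ℝ × ℝ,
      T (divP z (gamma ^ 2)) = q₁ ∧ T q₁ = q₂ ∧ T q₂ = q₃ ∧ T q₃ = q₄ ∧ T q₄ = q₅ ∧
      T q₅ = divP (T z) (gamma ^ 2) ∧
      divP z (gamma ^ 2) ∈ D1 ∧ q₁ ∈ D0 ∧ q₂ ∈ D1 ∧ q₃ ∈ D1 ∧ q₄ ∈ D0 ∧ q₅ ∈ D1 ∧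
      ∀ q ∈ [q₁, q₂, q₃, q₄, q₅], q ∉ (divP · (gamma ^ 2)) '' Dcal := by
  obtain ⟨x, y⟩ := z
  obtain ⟨hy, hx1, hyx, hxy⟩ := mem_D1_iff.1 hz
  obtain ⟨h₁, h₂, h₃, h₄, h₅, h₆⟩ := T_orbit_divP_gamma_sq hz
  have hg := gamma_sq
  have hg₁ := three_halves_lt_gamma
  have hg₂ := gamma_lt_five_thirds
  have hx : 0 < x := by nlinarith
  -- With `γ(2 - γ) = γ - 1` and `γ(2γ - 3) = 2 - γ` every inequality below is a combination of
  -- the inequalities defining `D₁`.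
  refine ⟨_, _, _, _, _, h₁, h₂, h₃, h₄, h₅, h₆, ?_, ?_, ?_, ?_, ?_, ?_, ?_⟩
  · simp only [divP, div_gamma_sq]
    exact mem_D1_iff.2 ⟨by nlinarith, by nlinarith, by nlinarith, Or.inl (by nlinarith)⟩
  · exact mem_D0_iff.2 ⟨by nlinarith, by nlinarith, by nlinarith, by nlinarith⟩
  · exact mem_D1_iff.2 ⟨by nlinarith, by nlinarith, by nlinarith, Or.inr (by nlinarith)⟩
  · exact mem_D1_iff.2 ⟨by nlinarith, by nlinarith, by nlinarith, Or.inl (by nlinarith)⟩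
  · exact mem_D0_iff.2 ⟨by nlinarith, by nlinarith, by nlinarith, by nlinarith⟩
  · refine mem_D1_iff.2 ⟨by nlinarith, by nlinarith, by nlinarith, ?_⟩
    rcases hxy with h | h
    · exact Or.inl (by nlinarith)
    · exact Or.inr (by nlinarith)
  · simp only [List.mem_cons, List.not_mem_nil, or_false]
    rintro q (rfl | rfl | rfl | rfl | rfl) <;> apply not_mem_image_divP_gamma_sq
    · exact Or.inr (by nlinarith)
    · exact Or.inl (by nlinarith)
    · rcases hxy with h | h
      · exact Or.inl (by nlinarith)
      · exact Or.inr (by nlinarith)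
    · exact Or.inr (by nlinarith)
    · exact Or.inl (by nlinarith)

lemma reachesAvoiding_of_mem_D0 {c : ℝ} (hc : 1 ≤ c) (S : Set (ℝ × ℝ)) {z : ℝ × ℝ}
    (hz : z ∈ D0) : ReachesAvoiding T S 1 (divP z c) (divP (T z) c) :=
  T_divP_of_mem_D0 hc hz ▸ ReachesAvoiding.one T S (divP z c)

lemma reachesAvoiding_of_mem_D1 (n : ℕ) {z : ℝ × ℝ} (hz : z ∈ D1) :
    ReachesAvoiding T ((divP · (gamma ^ (2 * n))) '' Dcal) (N n)
      (divP z (gamma ^ (2 * n))) (divP (T z) (gamma ^ (2 * n))) := by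
  induction n generalizing z with
  | zero => simpa [N_zero, divP] using ReachesAvoiding.one T _ z
  | succ n ih =>
    set c := gamma ^ (2 * n)
    have hc : 1 ≤ c := one_le_pow₀ one_lt_gamma.le
    have hpow : gamma ^ (2 * (n + 1)) = gamma ^ 2 * c := by rw [← pow_add]; ring_nf
    obtain ⟨q₁, q₂, q₃, q₄, q₅, h₁, h₂, h₃, h₄, h₅, h₆, m₀, m₁, m₂, m₃, m₄, m₅, hout⟩ :=
      exists_itinerary_divP_gamma_sq hz
    set S := (divP · (gamma ^ 2 * c)) '' Dcal
    have seg₁ (q : ℝ × ℝ) (hq : q ∈ D1) := (ih hq).mono (image_divP_gamma_sq_mul_subset c)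
    have seg₀ (q : ℝ × ℝ) (hq : q ∈ D0) := reachesAvoiding_of_mem_D0 hc S hq
    have out (q : ℝ × ℝ) (hq : q ∈ [q₁, q₂, q₃, q₄, q₅]) : divP q c ∉ S :=
      divP_not_mem_image_gamma_sq_mul (zero_lt_one.trans_le hc).ne' (hout q hq)
    have := (h₁ ▸ seg₁ _ m₀).trans (out q₁ (by simp)) <|
      (h₂ ▸ seg₀ _ m₁).trans (out q₂ (by simp)) <| (h₃ ▸ seg₁ _ m₂).trans (out q₃ (by simp)) <|
      (h₄ ▸ seg₁ _ m₃).trans (out q₄ (by simp)) <| (h₅ ▸ seg₀ _ m₄).trans (out q₅ (by simp)) <|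
      h₆ ▸ seg₁ _ m₅
    rw [hpow, N_succ, ← divP_divP, ← divP_divP (T z)]
    convert this using 1
    ring

/-- iterated self-similarity of T under scaling by 1/γ^{2n}. -/
theorem stmt_3 (n : ℕ) :
    (∀ z ∈ D0, T (divP z (gamma ^ (2 * n))) = divP (T z) (gamma ^ (2 * n))) ∧
    (∀ z ∈ D1, T^[N n] (divP z (gamma ^ (2 * n))) = divP (T z) (gamma ^ (2 * n))) ∧
    (∀ z ∈ D1, ∀ k : ℕ, 1 ≤ k → k < N n →
      T^[k] (divP z (gamma ^ (2 * n))) ∉ (fun w => divP w (gamma ^ (2 * n))) '' Dcal) :=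
  ⟨fun _ hz => T_divP_of_mem_D0 (one_le_pow₀ one_lt_gamma.le) hz,
    fun _ hz => (reachesAvoiding_of_mem_D1 n hz).iterate_eq,
    fun _ hz => (reachesAvoiding_of_mem_D1 n hz).not_mem⟩
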